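/- arXiv:2101.11351 — 4 statements merged into one kernel-verified Lean document; each statement's English description precedes it below -/
import Mathlib

section
/- For real matrices A, B of size m×n, one has A Aᵀ = B Bᵀ if and only if there exists an orthogonal n×n matrix U with A = B * U. -/
open Matrix

open scoped InnerProductSpace

/-! Since `A * Aᴴ = B * Bᴴ` says that `‖Aᴴ x‖ = ‖Bᴴ x‖` for all `x`, the assignment
`Bᴴ x ↦ Aᴴ x` is a well-defined isometry on the range of `Bᴴ`. It extends to a linear isometry
of the whole space, whose matrix `W` is unitary with `W * Bᴴ = Aᴴ`; take `U = Wᴴ`. -/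

theorem LinearMap.exists_linearIsometry_apply_eq_of_norm_eq {𝕜 E F : Type*} [RCLike 𝕜]
    [AddCommGroup E] [Module 𝕜 E] [NormedAddCommGroup F] [InnerProductSpace 𝕜 F]
    [FiniteDimensional 𝕜 F] {f g : E →ₗ[𝕜] F} (h : ∀ x, ‖f x‖ = ‖g x‖) :
    ∃ V : F →ₗᵢ[𝕜] F, ∀ x, V (g x) = f x := by
  obtain ⟨s, hs⟩ := g.rangeRestrict.exists_rightInverse_of_surjective g.range_rangeRestrict
  have hgs : ∀ y, g (s y) = y := fun y => congrArg Subtype.val (LinearMap.congr_fun hs y)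
  have hfs : ∀ x, f (s ⟨g x, g.mem_range_self x⟩) = f x := by
    intro x
    rw [← sub_eq_zero, ← map_sub, ← norm_eq_zero, h, map_sub, hgs, sub_self, norm_zero]
  let L : LinearMap.range g →ₗᵢ[𝕜] F :=
    ⟨f ∘ₗ s, fun y => by simp only [LinearMap.comp_apply, h, hgs, Submodule.coe_norm]⟩
  exact ⟨L.extend, fun x => (L.extend_apply ⟨g x, g.mem_range_self x⟩).trans (hfs x)⟩

variable {𝕜 m n : Type*} [RCLike 𝕜] [Fintype m] [Fintype n] [DecidableEq n]

theorem Matrix.norm_toEuclideanLin_conjTranspose_sq [DecidableEq m] (A : Matrix m n 𝕜)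
    (x : EuclideanSpace 𝕜 m) :
    ‖toEuclideanLin Aᴴ x‖ ^ 2 = RCLike.re ⟪x, toEuclideanLin (A * Aᴴ) x⟫_𝕜 := by
  rw [@norm_sq_eq_re_inner 𝕜, toEuclideanLin_conjTranspose_eq_adjoint,
    LinearMap.adjoint_inner_left, toLpLin_mul_same, toEuclideanLin_conjTranspose_eq_adjoint,
    LinearMap.comp_apply]

theorem Matrix.toEuclideanLin_symm_mem_unitaryGroup
    (V : EuclideanSpace 𝕜 n →ₗᵢ[𝕜] EuclideanSpace 𝕜 n) :
    toEuclideanLin.symm V.toLinearMap ∈ unitaryGroup n 𝕜 := by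
  rw [mem_unitaryGroup_iff', star_eq_conjTranspose]
  apply toEuclideanLin.injective
  simp [toEuclideanLin_conjTranspose_eq_adjoint]

theorem Matrix.mul_conjTranspose_self_eq_iff_exists_unitary [DecidableEq m]
    (A B : Matrix m n 𝕜) :
    A * Aᴴ = B * Bᴴ ↔ ∃ U ∈ unitaryGroup n 𝕜, A = B * U := by
  constructor
  · intro h
    have hnorm (x : EuclideanSpace 𝕜 m) : ‖toEuclideanLin Aᴴ x‖ = ‖toEuclideanLin Bᴴ x‖ :=
      (sq_eq_sq₀ (norm_nonneg _) (norm_nonneg _)).1 <| by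
        rw [norm_toEuclideanLin_conjTranspose_sq, norm_toEuclideanLin_conjTranspose_sq, h]
    obtain ⟨V, hV⟩ := LinearMap.exists_linearIsometry_apply_eq_of_norm_eq hnorm
    set W := toEuclideanLin.symm V.toLinearMap
    have hWB : W * Bᴴ = Aᴴ := toEuclideanLin.injective <| by
      ext1 x
      simp [W, hV]
    refine ⟨Wᴴ, Unitary.star_mem (toEuclideanLin_symm_mem_unitaryGroup V), ?_⟩
    rw [← conjTranspose_conjTranspose A, ← hWB, conjTranspose_mul, conjTranspose_conjTranspose]
  · rintro ⟨U, hU, rfl⟩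
    rw [conjTranspose_mul, Matrix.mul_assoc, ← Matrix.mul_assoc U, ← star_eq_conjTranspose,
      mem_unitaryGroup_iff.1 hU, Matrix.one_mul]

theorem orth_equivalence {m n : ℕ} (A B : Matrix (Fin m) (Fin n) ℝ) :
    A * Aᵀ = B * Bᵀ ↔ ∃ U : Matrix (Fin n) (Fin n) ℝ, U * Uᵀ = 1 ∧ A = B * U := by
  simpa [conjTranspose_eq_transpose_of_trivial, mem_unitaryGroup_iff, star_eq_conjTranspose] using
    mul_conjTranspose_self_eq_iff_exists_unitary A B
end

section
/- If A x = c and B x = d are consistent systems of linear equations over ℝ (each has at least one solution) with the same solution set, then there exists an invertible matrix S such that B = S * A and d = S.mulVec c. -/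
/-! The common solution set is `x₀ + ker A = x₀ + ker B`, so `A` and `B` have the same kernel.
Hence `A x ↦ B x` is a well-defined isomorphism `range A ≃ range B`; it extends to an
automorphism `S` of `ℝᵐ` by matching complements of `range A` and `range B`, which have equal
dimension. Finally `d = B x₀ = S (A x₀) = S c`. -/

theorem LinearMap.ker_eq_of_setOf_eq {R V W W' : Type*} [Ring R] [AddCommGroup V] [Module R V]
    [AddCommGroup W] [Module R W] [AddCommGroup W'] [Module R W']
    (f : V →ₗ[R] W) (g : V →ₗ[R] W') {c : W} {d : W'} {x₀ : V} (hx₀ : f x₀ = c)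
    (h : {x | f x = c} = {x | g x = d}) : ker f = ker g := by
  have hg : g x₀ = d := (Set.ext_iff.mp h x₀).mp hx₀
  ext x
  simpa only [mem_ker, Set.mem_ofPred_eq, map_add, hx₀, hg, add_eq_right] using
    Set.ext_iff.mp h (x + x₀)

theorem LinearEquiv.exists_extend {K V : Type*} [DivisionRing K] [AddCommGroup V] [Module K V]
    [FiniteDimensional K V] {p q : Submodule K V} (e : p ≃ₗ[K] q) :
    ∃ φ : V ≃ₗ[K] V, ∀ x : p, φ x = e x := by
  obtain ⟨p', hp⟩ := p.exists_isCompl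
  obtain ⟨q', hq⟩ := q.exists_isCompl
  have hrank : Module.finrank K p' = Module.finrank K q' := by
    have := Submodule.finrank_add_eq_of_isCompl hp
    have := Submodule.finrank_add_eq_of_isCompl hq
    have := e.finrank_eq
    omega
  refine ⟨(p.prodEquivOfIsCompl p' hp).symm ≪≫ₗ e.prodCongr (.ofFinrankEq p' q' hrank) ≪≫ₗ
    q.prodEquivOfIsCompl q' hq, fun x => ?_⟩
  simp

theorem LinearMap.exists_linearEquiv_comp_eq_of_ker_eq {K V W : Type*} [DivisionRing K]
    [AddCommGroup V] [Module K V] [AddCommGroup W] [Module K W] [FiniteDimensional K W]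
    {f g : V →ₗ[K] W} (h : ker f = ker g) :
    ∃ φ : W ≃ₗ[K] W, φ.toLinearMap ∘ₗ f = g := by
  -- `range f ≃ V ⧸ ker f = V ⧸ ker g ≃ range g`, sending `f x` to `g x`
  obtain ⟨φ, hφ⟩ := (f.quotKerEquivRange.symm ≪≫ₗ Submodule.quotEquivOfEq _ _ h ≪≫ₗ
    g.quotKerEquivRange).exists_extend
  refine ⟨φ, LinearMap.ext fun x => ?_⟩
  simpa using hφ ⟨f x, mem_range_self f x⟩

theorem Matrix.exists_isUnit_mul_eq_of_ker_eq {K m n : Type*} [Field K] [Fintype m]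
    [DecidableEq m] [Fintype n] [DecidableEq n] {A B : Matrix m n K}
    (h : LinearMap.ker A.mulVecLin = LinearMap.ker B.mulVecLin) :
    ∃ S : Matrix m m K, IsUnit S ∧ B = S * A := by
  obtain ⟨φ, hφ⟩ := LinearMap.exists_linearEquiv_comp_eq_of_ker_eq h
  refine ⟨LinearMap.toMatrix' φ.toLinearMap, ?_, ?_⟩
  · exact LinearMap.isUnit_toMatrix'_iff.mpr ((Module.End.isUnit_iff _).mpr φ.bijective)
  · rw [← LinearMap.toMatrix'_toLin' B, Matrix.toLin'_apply', ← hφ, LinearMap.toMatrix'_comp,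
      ← Matrix.toLin'_apply', LinearMap.toMatrix'_toLin']

theorem affine_equivalence_general {m n : ℕ} (A B : Matrix (Fin m) (Fin n) ℝ)
    (c d : Fin m → ℝ)
    (hA : ∃ x, A.mulVec x = c)
    (hsol : {x : Fin n → ℝ | A.mulVec x = c} = {x : Fin n → ℝ | B.mulVec x = d}) :
    ∃ S : Matrix (Fin m) (Fin m) ℝ, IsUnit S ∧ B = S * A ∧ d = S.mulVec c := by
  obtain ⟨x₀, hx₀⟩ := hA
  obtain ⟨S, hS, hBSA⟩ := Matrix.exists_isUnit_mul_eq_of_ker_eq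
    (A.mulVecLin.ker_eq_of_setOf_eq B.mulVecLin hx₀ hsol)
  have hBx₀ : B.mulVec x₀ = d := (Set.ext_iff.mp hsol x₀).mp hx₀
  refine ⟨S, hS, hBSA, ?_⟩
  rw [← hBx₀, ← hx₀, hBSA, Matrix.mulVec_mulVec]

theorem affine_equivalence {m n : ℕ} (A B : Matrix (Fin m) (Fin n) ℝ)
    (c d : Fin m → ℝ)
    (hA : ∃ x, A.mulVec x = c) (hB : ∃ x, B.mulVec x = d)
    (hsol : {x : Fin n → ℝ | A.mulVec x = c} = {x : Fin n → ℝ | B.mulVec x = d}) :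
    ∃ S : Matrix (Fin m) (Fin m) ℝ, IsUnit S ∧ B = S * A ∧ d = S.mulVec c :=
  affine_equivalence_general A B c d hA hsol
end

section
/- For any real m×n matrix A there exist an invertible m×m matrix S and an orthogonal n×n matrix T such that S * A * T⁻¹ is the block matrix with an r×r identity block in the top-left and zeros elsewhere, where r = rank A. -/
/-!
Choose an orthonormal basis of `ℝⁿ` whose last `n - r` vectors lie in the kernel of `A`, and let
`U` be the orthogonal matrix with these vectors as columns. Then the columns of `A * U` past `r`
vanish, so its first `r` columns span its column space and are linearly independent. Extending
them to a basis of `ℝᵐ` gives an invertible `M` with `M * D = A * U`, where `D` is the target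
matrix; take `S = M⁻¹` and `T = Uᵀ`.
-/

open Matrix Module Function Set

section Basis

variable {K V ι κ : Type*} [Field K] [AddCommGroup V] [Module K V] [FiniteDimensional K V]
  [Fintype ι]

theorem LinearIndependent.exists_basis_extension_of_injective
    (card_ι : finrank K V = Fintype.card ι) {u : κ → V} (hu : LinearIndependent K u)
    {f : κ → ι} (hf : Injective f) : ∃ b : Basis ι K V, ∀ k, b (f k) = u k := by
  classical
  have hs := hu.linearIndepOn_id
  let b₀ := Basis.extend hs
  have : Finite (hs.extend (subset_univ _)) := Module.Finite.finite_basis b₀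
  have ht := Set.toFinite (hs.extend (subset_univ _))
  have hcard : Fintype.card ι = ht.toFinset.card := by
    rw [← card_ι, Module.finrank_eq_card_basis b₀]
    simp
  have hmaps : (range f).MapsTo (extend f u 0) ht.toFinset := by
    rintro _ ⟨k, rfl⟩
    simpa [hf.extend_apply] using hs.subset_extend _ (mem_range_self k)
  have hinj : (range f).InjOn (extend f u 0) := by
    rintro _ ⟨a, rfl⟩ _ ⟨b, rfl⟩ hab
    simp only [hf.extend_apply] at hab
    rw [hu.injective hab]
  obtain ⟨g, hg⟩ := hmaps.exists_equiv_extend_of_card_eq hcard hinj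
  refine ⟨b₀.reindex (g.trans (Equiv.subtypeEquivRight (by simp))).symm, fun k => ?_⟩
  simp [b₀, hg _ (mem_range_self k), hf.extend_apply]

end Basis

section InnerProductSpace

variable {𝕜 E : Type*} [RCLike 𝕜] [NormedAddCommGroup E] [InnerProductSpace 𝕜 E]
  [FiniteDimensional 𝕜 E]

theorem Orthonormal.exists_orthonormalBasis_extension_of_injective {ι κ : Type*}
    [Fintype ι] (card_ι : finrank 𝕜 E = Fintype.card ι) {u : κ → E} (hu : Orthonormal 𝕜 u)
    {f : κ → ι} (hf : Injective f) : ∃ b : OrthonormalBasis ι 𝕜 E, ∀ k, b (f k) = u k := by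
  classical
  have hrestrict :
      (range f).domRestrict (extend f u 0) = u ∘ (Equiv.ofInjective f hf).symm := by
    ext ⟨_, k, rfl⟩
    simp [Set.domRestrict, hf.extend_apply]
  obtain ⟨b, hb⟩ := Orthonormal.exists_orthonormalBasis_extension_of_card_eq card_ι
    (hrestrict ▸ hu.comp _ (Equiv.injective _))
  exact ⟨b, fun k => (hb _ (mem_range_self k)).trans (hf.extend_apply u 0 k)⟩

theorem Submodule.exists_orthonormalBasis_fin_tail_mem (W : Submodule 𝕜 E) {r N : ℕ}
    (hN : finrank 𝕜 E = N) (hW : r + finrank 𝕜 W = N) :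
    ∃ b : OrthonormalBasis (Fin N) 𝕜 E, ∀ i : Fin N, r ≤ i → b i ∈ W := by
  let d := stdOrthonormalBasis 𝕜 W
  let tail : Fin (finrank 𝕜 W) → Fin N := fun j => Fin.cast hW (Fin.natAdd r j)
  obtain ⟨b, hb⟩ := (d.orthonormal.comp_linearIsometry W.subtypeₗᵢ)
    |>.exists_orthonormalBasis_extension_of_injective (by simpa using hN) (f := tail)
      ((Fin.cast_injective hW).comp (Fin.natAdd_injective _ r))
  refine ⟨b, fun i hi => ?_⟩
  obtain ⟨j, rfl⟩ : ∃ j, tail j = i :=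
    ⟨⟨i - r, by omega⟩, by ext; simp only [Fin.natAdd_mk, Fin.cast_mk, tail]; omega⟩
  simp [hb]

end InnerProductSpace

namespace Matrix

theorem exists_mem_orthogonalGroup_mul_apply_eq_zero {m n : ℕ}
    (A : Matrix (Fin m) (Fin n) ℝ) :
    ∃ U ∈ orthogonalGroup (Fin n) ℝ, ∀ i (j : Fin n), A.rank ≤ j → (A * U) i j = 0 := by
  have hrank : A.rank + finrank ℝ (LinearMap.ker (toEuclideanLin A)) = n := by
    rw [toEuclideanLin_eq_toLin_orthonormal, rank_eq_finrank_range_toLin A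
      (EuclideanSpace.basisFun _ ℝ).toBasis (EuclideanSpace.basisFun _ ℝ).toBasis,
      LinearMap.finrank_range_add_finrank_ker, finrank_euclideanSpace_fin]
  obtain ⟨b, hb⟩ := (LinearMap.ker (toEuclideanLin A)).exists_orthonormalBasis_fin_tail_mem
    finrank_euclideanSpace_fin hrank
  refine ⟨(EuclideanSpace.basisFun _ ℝ).toBasis.toMatrix b,
    OrthonormalBasis.toMatrix_orthonormalBasis_mem_orthogonal _ _, fun i j hj => ?_⟩
  have := congr_arg (· i) (hb j hj)
  simpa [Matrix.mul_apply, Basis.toMatrix_apply, toLpLin_apply, mulVec, dotProduct] using this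

def rankNormalForm (R : Type*) [Zero R] [One R] (m n r : ℕ) : Matrix (Fin m) (Fin n) R :=
  of fun i j => if (i : ℕ) = j ∧ (i : ℕ) < r then 1 else 0

theorem mul_rankNormalForm_apply {R l : Type*} [NonAssocSemiring R] {m n r : ℕ} (hr : r ≤ m)
    (M : Matrix l (Fin m) R) (i : l) (j : Fin n) :
    (M * rankNormalForm R m n r) i j =
      if h : (j : ℕ) < r then M i ⟨j, h.trans_le hr⟩ else 0 := by
  rw [mul_apply]
  split_ifs with hj
  · rw [Finset.sum_eq_single ⟨j, hj.trans_le hr⟩] <;>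
      simp +contextual [rankNormalForm, Fin.ext_iff, hj]
  · refine Finset.sum_eq_zero fun k _ => ?_
    simp only [rankNormalForm, of_apply, mul_ite, mul_one, mul_zero, ite_eq_right_iff, and_imp]
    omega

variable {K : Type*} [Field K] {m n : ℕ}

theorem linearIndependent_col_castLE_rank (C : Matrix (Fin m) (Fin n) K)
    (hC : ∀ i (j : Fin n), C.rank ≤ j → C i j = 0) :
    LinearIndependent K fun j : Fin C.rank => C.col (Fin.castLE C.rank_le_width j) := by
  have hspan : Submodule.span K (range fun j : Fin C.rank => C.col (Fin.castLE C.rank_le_width j))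
      = Submodule.span K (range C.col) := by
    refine le_antisymm (Submodule.span_mono (range_comp_subset_range _ _)) (Submodule.span_le.2 ?_)
    rintro _ ⟨j, rfl⟩
    by_cases hj : (j : ℕ) < C.rank
    · exact Submodule.subset_span ⟨⟨j, hj⟩, rfl⟩
    · have : C.col j = 0 := funext fun i => hC i j (not_lt.1 hj)
      simp [this]
  rw [linearIndependent_iff_card_eq_finrank_span, Set.finrank, hspan, ← rank_eq_finrank_span_cols,
    Fintype.card_fin]

theorem exists_isUnit_mul_rankNormalForm_eq (C : Matrix (Fin m) (Fin n) K)
    (hC : ∀ i (j : Fin n), C.rank ≤ j → C i j = 0) :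
    ∃ M : Matrix (Fin m) (Fin m) K, IsUnit M ∧ M * rankNormalForm K m n C.rank = C := by
  obtain ⟨b, hb⟩ := (linearIndependent_col_castLE_rank C hC).exists_basis_extension_of_injective
    (by simp) (Fin.castLE_injective C.rank_le_height)
  refine ⟨of fun i k => b k i, linearIndependent_cols_iff_isUnit.1 b.linearIndependent, ?_⟩
  ext i j
  rw [mul_rankNormalForm_apply C.rank_le_height]
  split_ifs with hj
  · simpa using congr_fun (hb ⟨j, hj⟩) i
  · exact (hC i j (not_lt.1 hj)).symm

end Matrix

theorem smith_like_decomposition {m n : ℕ} (A : Matrix (Fin m) (Fin n) ℝ) :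
    ∃ (S : Matrix (Fin m) (Fin m) ℝ) (T : Matrix (Fin n) (Fin n) ℝ),
      IsUnit S ∧ T * Tᵀ = 1 ∧
      S * A * T⁻¹ =
        Matrix.of (fun (i : Fin m) (j : Fin n) =>
          if (i : ℕ) = (j : ℕ) ∧ (i : ℕ) < A.rank then (1 : ℝ) else 0) := by
  obtain ⟨U, hU, hAU⟩ := A.exists_mem_orthogonalGroup_mul_apply_eq_zero
  have hUU : Uᵀ * U = 1 := (mem_orthogonalGroup_iff' _ _).1 hU
  have hrank : (A * U).rank = A.rank :=
    rank_mul_eq_left_of_isUnit_det U A (isUnit_det_of_left_inverse hUU)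
  obtain ⟨M, hM, hMAU⟩ := exists_isUnit_mul_rankNormalForm_eq (A * U) (hrank ▸ hAU)
  refine ⟨M⁻¹, Uᵀ, isUnit_nonsing_inv_iff.2 hM, by simpa using hUU, ?_⟩
  rw [inv_eq_right_inv hUU, Matrix.mul_assoc, ← hMAU, ← Matrix.mul_assoc,
    nonsing_inv_mul _ ((isUnit_iff_isUnit_det M).1 hM), Matrix.one_mul, hrank]
  rfl
end

section
/- A Gauss morphism (A,b,Σ) is deterministic (commutes with copying) if and only if Σ = 0. Concretely: the covariance of the copy composite ⟨f,f⟩ built from (A,b,Σ) equals the block matrix [[Σ,Σ],[Σ,Σ]], and this equals the tensor covariance diag(Σ,Σ) iff Σ = 0. -/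
/-- A `Gauss` morphism `(A, b, Σ) : m → n` is deterministic iff `Σ = 0`.
Concretely, the covariance of `copy ∘ f`, which is `fromBlocks Σ Σ Σ Σ`, equals the
covariance `fromBlocks Σ 0 0 Σ` of `(f ⊗ f) ∘ copy` iff `Σ = 0`. -/
theorem gauss_deterministic_iff {n : ℕ} (S : Matrix (Fin n) (Fin n) ℝ) :
    Matrix.fromBlocks S S S S = Matrix.fromBlocks S 0 0 S ↔ S = 0 := by
  constructor
  · intro h
    have := congrArg Matrix.toBlocks₁₂ h
    simpa [Matrix.toBlocks_fromBlocks₁₂] using this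
  · rintro rfl; simp
end
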